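/- arXiv:2112.05506 — 2 statements merged into one kernel-verified Lean document; each statement's English description precedes it below -/
import Mathlib

section
/- Let A and A' be real symmetric n×n matrices differing only in their k-th row and column. Then for any function f of finite total variation, |∑_{i=1}^n f(λ_i(A)) - ∑_{i=1}^n f(λ_i(A'))| ≤ 2‖f‖_TV, where λ_i denote the eigenvalues. -/
/-!
Since `A` and `A'` differ only in row and column `k`, their quadratic forms agree on the
hyperplane `{x | x k = 0}`. A dimension count against the spans of eigenvectors with eigenvalues
`≤ t` and `> t` then shows that the eigenvalue counting functions of `A` and `A'` differ by at
most one at every level `t`. For the decreasingly sorted eigenvalues this means that the intervals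
between the `i`-th eigenvalues of `A` and of `A'` are non-overlapping, so
`∑ |f(λᵢ(A)) - f(λᵢ(A'))|` is bounded by the variation of `f` along one monotone chain, hence
by `‖f‖_TV` itself.
-/

open Finset Module Matrix

namespace OrthonormalBasis

variable {ι E : Type*} [Fintype ι] [NormedAddCommGroup E] [InnerProductSpace ℝ E]

lemma real_inner_eq_sum_repr_mul_repr (b : OrthonormalBasis ι ℝ E) (x y : E) :
    inner ℝ x y = ∑ i, b.repr x i * b.repr y i := by
  rw [← b.sum_inner_mul_inner]
  simp only [b.repr_apply_apply, real_inner_comm x]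

lemma finrank_span_image (b : OrthonormalBasis ι ℝ E) (s : Finset ι) :
    finrank ℝ (Submodule.span ℝ (b '' s)) = #s := by
  classical
  have := finrank_span_eq_card (R := ℝ)
    (b.orthonormal.linearIndependent.comp ((↑) : s → ι) Subtype.val_injective)
  rwa [Set.range_comp, Subtype.range_coe_subtype, Fintype.card_coe] at this

lemma repr_eq_zero_of_mem_span_image (b : OrthonormalBasis ι ℝ E) {s : Set ι} {x : E}
    (hx : x ∈ Submodule.span ℝ (b '' s)) {i : ι} (hi : i ∉ s) : b.repr x i = 0 := by
  rw [← b.coe_toBasis, Module.Basis.mem_span_image] at hx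
  by_contra h
  exact hi (hx (by simpa [b.coe_toBasis_repr_apply] using h))

end OrthonormalBasis

namespace LinearMap.IsSymmetric

variable {E : Type*} [NormedAddCommGroup E] [InnerProductSpace ℝ E] [FiniteDimensional ℝ E]
  {T : E →ₗ[ℝ] E} (hT : T.IsSymmetric) {n : ℕ} (hn : finrank ℝ E = n)

lemma inner_apply_self_eq_sum (x : E) :
    inner ℝ x (T x) =
      ∑ i, hT.eigenvalues hn i * (hT.eigenvectorBasis hn).repr x i ^ 2 := by
  rw [(hT.eigenvectorBasis hn).real_inner_eq_sum_repr_mul_repr]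
  refine Finset.sum_congr rfl fun i _ => ?_
  rw [hT.eigenvectorBasis_apply_self_apply]
  simp only [RCLike.ofReal_real_eq_id, id_eq]
  ring

lemma inner_apply_self_sub_eq_sum (t : ℝ) (x : E) :
    inner ℝ x (T x) - t * inner ℝ x x =
      ∑ i, (hT.eigenvalues hn i - t) * (hT.eigenvectorBasis hn).repr x i ^ 2 := by
  simp only [hT.inner_apply_self_eq_sum hn, Finset.mul_sum, ← Finset.sum_sub_distrib,
    (hT.eigenvectorBasis hn).real_inner_eq_sum_repr_mul_repr]
  exact Finset.sum_congr rfl fun i _ => by ring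

lemma inner_apply_self_le_of_mem_span {s : Set (Fin n)} {t : ℝ}
    (hs : ∀ i ∈ s, hT.eigenvalues hn i ≤ t) {x : E}
    (hx : x ∈ Submodule.span ℝ (hT.eigenvectorBasis hn '' s)) :
    inner ℝ x (T x) ≤ t * inner ℝ x x := by
  refine sub_nonpos.1 ((hT.inner_apply_self_sub_eq_sum hn t x).trans_le
    (Finset.sum_nonpos fun i _ => ?_))
  by_cases hi : i ∈ s
  · exact mul_nonpos_of_nonpos_of_nonneg (sub_nonpos.2 (hs i hi)) (sq_nonneg _)
  · simp [(hT.eigenvectorBasis hn).repr_eq_zero_of_mem_span_image hx hi]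

lemma lt_inner_apply_self_of_mem_span {s : Set (Fin n)} {t : ℝ}
    (hs : ∀ i ∈ s, t < hT.eigenvalues hn i) {x : E}
    (hx : x ∈ Submodule.span ℝ (hT.eigenvectorBasis hn '' s)) (hx₀ : x ≠ 0) :
    t * inner ℝ x x < inner ℝ x (T x) := by
  have hzero {i} (hi : i ∉ s) := (hT.eigenvectorBasis hn).repr_eq_zero_of_mem_span_image hx hi
  obtain ⟨j, hj⟩ : ∃ j, (hT.eigenvectorBasis hn).repr x j ≠ 0 := by
    by_contra! h
    exact hx₀ ((hT.eigenvectorBasis hn).repr.injective (by ext j; simp [h j]))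
  have hjs : j ∈ s := by
    by_contra hjs
    exact hj (hzero hjs)
  refine sub_pos.1 ((hT.inner_apply_self_sub_eq_sum hn t x).symm ▸
    Finset.sum_pos' (fun i _ => ?_) ⟨j, Finset.mem_univ _, ?_⟩)
  · by_cases hi : i ∈ s
    · exact mul_nonneg (sub_nonneg.2 (hs i hi).le) (sq_nonneg _)
    · simp [hzero hi]
  · exact mul_pos (sub_pos.2 (hs j hjs)) (by positivity)

theorem card_eigenvalues_le_add_finrank {T' : E →ₗ[ℝ] E} (hT' : T'.IsSymmetric)
    (K : Submodule ℝ E) (hK : ∀ x ∈ K, inner ℝ x (T x) = inner ℝ x (T' x)) (t : ℝ) :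
    #{i | hT'.eigenvalues hn i ≤ t} + finrank ℝ K ≤ #{i | hT.eigenvalues hn i ≤ t} + n := by
  classical
  let U := Submodule.span ℝ
    (hT'.eigenvectorBasis hn '' ↑({i | hT'.eigenvalues hn i ≤ t} : Finset _))
  let W := Submodule.span ℝ
    (hT.eigenvectorBasis hn '' ↑({i | t < hT.eigenvalues hn i} : Finset _))
  have hdisj : Disjoint U (W ⊓ K) := by
    refine Submodule.disjoint_def.2 fun x hxU hxWK => ?_
    by_contra hx₀
    have hle := hT'.inner_apply_self_le_of_mem_span hn (t := t) (by simp) hxU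
    obtain ⟨hxW, hxK⟩ := Submodule.mem_inf.1 hxWK
    have hlt := hT.lt_inner_apply_self_of_mem_span hn (t := t) (by simp) hxW hx₀
    linarith [hK x hxK]
  have hUW := Submodule.finrank_add_finrank_le_of_disjoint hdisj
  have hWK := Submodule.finrank_sup_add_finrank_inf_eq W K
  have hsup := Submodule.finrank_le (W ⊔ K)
  have hcard : #{i | hT.eigenvalues hn i ≤ t} + #{i | t < hT.eigenvalues hn i} = n := by
    simpa [not_le] using Finset.card_filter_add_card_filter_not
      (s := Finset.univ) (fun i => hT.eigenvalues hn i ≤ t)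
  rw [(hT'.eigenvectorBasis hn).finrank_span_image] at hUW
  rw [(hT.eigenvectorBasis hn).finrank_span_image] at hWK
  omega

end LinearMap.IsSymmetric

lemma LinearMap.finrank_le_finrank_ker_add_one {K V : Type*} [Field K] [AddCommGroup V]
    [Module K V] [FiniteDimensional K V] (f : V →ₗ[K] K) :
    finrank K V ≤ finrank K (LinearMap.ker f) + 1 := by
  have := Submodule.finrank_le (LinearMap.range f)
  rw [finrank_self] at this
  linarith [f.finrank_range_add_finrank_ker]

lemma Matrix.dotProduct_mulVec_eq_of_apply_eq_zero {n R : Type*} [Fintype n]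
    [CommSemiring R] {A A' : Matrix n n R} {k : n}
    (hAA' : ∀ i j, i ≠ k → j ≠ k → A i j = A' i j)
    {x : n → R} (hx : x k = 0) : x ⬝ᵥ (A *ᵥ x) = x ⬝ᵥ (A' *ᵥ x) := by
  simp only [dotProduct, mulVec, Finset.mul_sum]
  refine Finset.sum_congr rfl fun i _ => Finset.sum_congr rfl fun j _ => ?_
  by_cases hi : i = k
  · simp [hi, hx]
  by_cases hj : j = k
  · simp [hj, hx]
  rw [hAA' i j hi hj]

theorem Matrix.IsHermitian.card_eigenvalues₀_le_add_one {n : Type*} [Fintype n]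
    [DecidableEq n] {A A' : Matrix n n ℝ} (hA : A.IsHermitian) (hA' : A'.IsHermitian) {k : n}
    (hAA' : ∀ i j, i ≠ k → j ≠ k → A i j = A' i j) (t : ℝ) :
    #{i | hA'.eigenvalues₀ i ≤ t} ≤ #{i | hA.eigenvalues₀ i ≤ t} + 1 := by
  let K := LinearMap.ker (EuclideanSpace.proj (𝕜 := ℝ) k).toLinearMap
  have hK : Fintype.card n ≤ finrank ℝ K + 1 := by
    simpa using LinearMap.finrank_le_finrank_ker_add_one
      (EuclideanSpace.proj (𝕜 := ℝ) k).toLinearMap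
  have hforms :
      ∀ x ∈ K, inner ℝ x (toEuclideanLin A x) = inner ℝ x (toEuclideanLin A' x) := by
    intro x hx
    simpa [EuclideanSpace.inner_eq_star_dotProduct, dotProduct_comm] using
      dotProduct_mulVec_eq_of_apply_eq_zero hAA' (x := x.ofLp) (by simpa [K] using hx)
  have := (isSymmetric_toEuclideanLin_iff.mpr hA).card_eigenvalues_le_add_finrank
    finrank_euclideanSpace (isSymmetric_toEuclideanLin_iff.mpr hA') K hforms t
  change #{i | hA'.eigenvalues₀ i ≤ t} + _ ≤ #{i | hA.eigenvalues₀ i ≤ t} + _ at this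
  omega

theorem Antitone.apply_le_of_card_filter_le_add_one {α : Type*} [LinearOrder α] {m : ℕ}
    {a b : Fin m → α} (ha : Antitone a) (hb : Antitone b)
    (hcount : ∀ t, #{l | b l ≤ t} ≤ #{l | a l ≤ t} + 1) {i j : Fin m} (hij : i < j) :
    a j ≤ b i := by
  by_contra! h
  have hb_le : #(Ici i) ≤ #{l | b l ≤ b i} :=
    card_le_card fun l hl => mem_filter.2 ⟨mem_univ _, hb (mem_Ici.1 hl)⟩
  have ha_le : #{l | a l ≤ b i} ≤ #(Ioi j) :=
    card_le_card fun l hl => mem_Ioi.2 <| lt_of_not_ge fun hlj =>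
      (ha hlj).not_gt ((mem_filter.1 hl).2.trans_lt h)
  have := hcount (b i)
  rw [Fin.card_Ici] at hb_le
  rw [Fin.card_Ioi] at ha_le
  have := j.isLt
  have : (i : ℕ) < j := hij
  omega

theorem Matrix.IsHermitian.max_eigenvalues₀_le_min {n : Type*} [Fintype n] [DecidableEq n]
    {A A' : Matrix n n ℝ} (hA : A.IsHermitian) (hA' : A'.IsHermitian) {k : n}
    (hAA' : ∀ i j, i ≠ k → j ≠ k → A i j = A' i j) {i j : Fin (Fintype.card n)}
    (hij : i < j) :
    max (hA.eigenvalues₀ j) (hA'.eigenvalues₀ j) ≤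
      min (hA.eigenvalues₀ i) (hA'.eigenvalues₀ i) :=
  max_le
    (le_min (hA.eigenvalues₀_antitone hij.le)
      (hA.eigenvalues₀_antitone.apply_le_of_card_filter_le_add_one hA'.eigenvalues₀_antitone
        (hA.card_eigenvalues₀_le_add_one hA' hAA') hij))
    (le_min
      (hA'.eigenvalues₀_antitone.apply_le_of_card_filter_le_add_one hA.eigenvalues₀_antitone
        (hA'.card_eigenvalues₀_le_add_one hA fun i j hi hj => (hAA' i j hi hj).symm) hij)
      (hA'.eigenvalues₀_antitone hij.le))

theorem Matrix.IsHermitian.sum_comp_eigenvalues {n M : Type*} [Fintype n] [DecidableEq n]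
    [AddCommMonoid M] {A : Matrix n n ℝ} (hA : A.IsHermitian) (g : ℝ → M) :
    ∑ i, g (hA.eigenvalues i) = ∑ i, g (hA.eigenvalues₀ i) :=
  Equiv.sum_comp _ (g ∘ hA.eigenvalues₀)

lemma Fin.strictMono_snoc {α : Type*} [Preorder α] {q : ℕ} {y : Fin (q + 1) → α}
    (hy : StrictMono y) {a : α} (ha : y (Fin.last q) < a) :
    StrictMono (Fin.snoc y a : Fin (q + 2) → α) := by
  refine Fin.strictMono_iff_lt_succ.2 fun i => ?_
  induction i using Fin.lastCases with
  | last => simpa using ha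
  | cast j =>
    rw [Fin.snoc_castSucc, Fin.succ_castSucc, Fin.snoc_castSucc]
    exact hy Fin.castSucc_lt_succ

theorem Monotone.exists_strictMono_sum_eq {α M : Type*} [LinearOrder α] [AddCommMonoid M]
    (g : α → α → M) (hg : ∀ a, g a a = 0) {u : ℕ → α} (hu : Monotone u) (p : ℕ) :
    ∃ (q : ℕ) (y : Fin (q + 1) → α), StrictMono y ∧ y (Fin.last q) = u p ∧
      ∑ i : Fin q, g (y i.succ) (y i.castSucc) = ∑ i ∈ range p, g (u (i + 1)) (u i) := by
  induction p with
  | zero => exact ⟨0, fun _ => u 0, Subsingleton.strictMono (α := Fin 1) _, rfl, by simp⟩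
  | succ p ih =>
    obtain ⟨q, y, hy, hlast, hsum⟩ := ih
    rw [sum_range_succ, ← hsum]
    rcases (hu p.le_succ).eq_or_lt with h | h
    · exact ⟨q, y, hy, hlast.trans h, by rw [← h, hg, add_zero]⟩
    · refine ⟨q + 1, Fin.snoc y (u (p + 1)), Fin.strictMono_snoc hy (hlast ▸ h), by simp, ?_⟩
      simp only [Fin.sum_univ_castSucc, Fin.succ_castSucc, Fin.snoc_castSucc, Fin.succ_last,
        Fin.snoc_last, hlast]

theorem sum_edist_le_eVariationOn {α E : Type*} [LinearOrder α] [PseudoEMetricSpace E]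
    (f : α → E) {m : ℕ} (x y : Fin m → α)
    (hsep : ∀ i j, i < j → max (x j) (y j) ≤ min (x i) (y i))
    (s : Set α) (hx : ∀ i, x i ∈ s) (hy : ∀ i, y i ∈ s) :
    ∑ i, edist (f (x i)) (f (y i)) ≤ eVariationOn f s := by
  induction m generalizing s with
  | zero => simp
  | succ m ih =>
    set c := min (x 0) (y 0)
    have htail := ih (x ∘ Fin.succ) (y ∘ Fin.succ)
      (fun i j hij => hsep _ _ (Fin.succ_lt_succ_iff.2 hij)) (s ∩ Set.Iic c)
      (fun i => ⟨hx _, (le_max_left _ _).trans (hsep 0 i.succ i.succ_pos)⟩)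
      (fun i => ⟨hy _, (le_max_right _ _).trans (hsep 0 i.succ i.succ_pos)⟩)
    have hhead := eVariationOn.edist_le f (s := s ∩ Set.Ici c)
      ⟨hx 0, min_le_left _ _⟩ ⟨hy 0, min_le_right _ _⟩
    calc ∑ i, edist (f (x i)) (f (y i))
        ≤ eVariationOn f (s ∩ Set.Iic c) + eVariationOn f (s ∩ Set.Ici c) := by
          rw [Fin.sum_univ_succ, add_comm]
          exact add_le_add htail hhead
      _ ≤ eVariationOn f ((s ∩ Set.Iic c) ∪ (s ∩ Set.Ici c)) :=
          eVariationOn.add_le_union f fun a ha b hb => ha.2.trans hb.2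
      _ ≤ eVariationOn f s :=
          eVariationOn.mono f (Set.union_subset Set.inter_subset_left Set.inter_subset_left)

section Variation

variable {α E : Type*} [LinearOrder α] [PseudoMetricSpace E]

def variationSums (f : α → E) : Set ℝ :=
  {s | ∃ (p : ℕ) (x : Fin (p + 1) → α), StrictMono x ∧
    s = ∑ i : Fin p, dist (f (x i.succ)) (f (x i.castSucc))}

lemma nonneg_of_isLUB_variationSums [Nonempty α] {f : α → E} {V : ℝ}
    (hV : IsLUB (variationSums f) V) : 0 ≤ V :=
  hV.1 ⟨0, fun _ => Classical.arbitrary α, Subsingleton.strictMono (α := Fin 1) _, by simp⟩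

lemma eVariationOn_univ_le_of_isLUB_variationSums {f : α → E} {V : ℝ}
    (hV : IsLUB (variationSums f) V) : eVariationOn f Set.univ ≤ ENNReal.ofReal V := by
  refine iSup_le fun ⟨p, u, hu, _⟩ => ?_
  obtain ⟨q, y, hy, -, hsum⟩ :=
    hu.exists_strictMono_sum_eq (fun a b => dist (f a) (f b)) (fun _ => dist_self _) p
  calc ∑ i ∈ range p, edist (f (u (i + 1))) (f (u i))
      = ENNReal.ofReal (∑ i ∈ range p, dist (f (u (i + 1))) (f (u i))) := by
        rw [ENNReal.ofReal_sum_of_nonneg fun _ _ => dist_nonneg]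
        simp [edist_dist]
    _ ≤ ENNReal.ofReal V := ENNReal.ofReal_le_ofReal (hV.1 ⟨q, y, hy, hsum.symm⟩)

theorem sum_dist_le_of_isLUB_variationSums [Nonempty α] {f : α → E} {V : ℝ}
    (hV : IsLUB (variationSums f) V) {m : ℕ}
    (x y : Fin m → α) (hsep : ∀ i j, i < j → max (x j) (y j) ≤ min (x i) (y i)) :
    ∑ i, dist (f (x i)) (f (y i)) ≤ V := by
  rw [← ENNReal.ofReal_le_ofReal_iff (nonneg_of_isLUB_variationSums hV),
    ENNReal.ofReal_sum_of_nonneg fun _ _ => dist_nonneg]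
  simp only [← edist_dist]
  exact (sum_edist_le_eVariationOn f x y hsep Set.univ (fun _ => trivial) fun _ => trivial).trans
    (eVariationOn_univ_le_of_isLUB_variationSums hV)

end Variation

/-- If the real symmetric matrices `A` and `A'` differ only in their `k`-th row
and column, then for any `f` of finite total variation `V`,
`|∑ f(λ_i(A)) - ∑ f(λ_i(A'))| ≤ 2 V`. -/
theorem eigenvalue_sum_row_column_perturbation
    (n : ℕ) (k : Fin n)
    (A A' : Matrix (Fin n) (Fin n) ℝ)
    (hA : A.IsHermitian) (hA' : A'.IsHermitian)
    (hdiff : ∀ i j : Fin n, i ≠ k → j ≠ k → A i j = A' i j)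
    (f : ℝ → ℝ) (V : ℝ)
    (hV : IsLUB {s : ℝ | ∃ (p : ℕ) (x : Fin (p + 1) → ℝ), StrictMono x ∧
        s = ∑ i : Fin p, |f (x i.succ) - f (x i.castSucc)|} V) :
    |∑ i, f (hA.eigenvalues i) - ∑ i, f (hA'.eigenvalues i)| ≤ 2 * V := by
  have hV' : IsLUB (variationSums f) V := by simpa only [variationSums, Real.dist_eq] using hV
  have hpairs : ∑ i, |f (hA.eigenvalues₀ i) - f (hA'.eigenvalues₀ i)| ≤ V := by
    simpa only [Real.dist_eq] using sum_dist_le_of_isLUB_variationSums hV' _ _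
      fun _ _ => hA.max_eigenvalues₀_le_min hA' hdiff
  rw [hA.sum_comp_eigenvalues, hA'.sum_comp_eigenvalues, ← sum_sub_distrib]
  linarith [abs_sum_le_sum_abs (fun i => f (hA.eigenvalues₀ i) - f (hA'.eigenvalues₀ i)) univ,
    nonneg_of_isLUB_variationSums hV']
end

section
/- Let v be a unit eigenvector of a real symmetric n×n matrix X with eigenvalue E that is not an eigenvalue of the principal minor X^{(1)}. Then the first coordinate of v satisfies v_1² = (1 + ⟨X_1, (E - X^{(1)})^{-2} X_1⟩)^{-1}, where X_1 is the first column of X with the first entry removed and X^{(1)} is the principal minor obtained by removing the first row and column. -/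
/-!
Write `v = (v₀, w)`. The rows after the first of `X v = E v` say `(E - X⁽¹⁾) w = v₀ X₁`, so
`w = v₀ (E - X⁽¹⁾)⁻¹ X₁`. Since `(E - X⁽¹⁾)⁻¹` is symmetric, `‖w‖² = v₀² ⟨X₁, (E - X⁽¹⁾)⁻² X₁⟩`,
and `1 = v₀² + ‖w‖²` gives the formula.
-/

open Matrix

namespace Matrix

variable {R : Type*} [CommRing R] {n : ℕ}

theorem mulVec_apply_succ (X : Matrix (Fin (n + 1)) (Fin (n + 1)) R) (v : Fin (n + 1) → R)
    (i : Fin n) :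
    (X *ᵥ v) i.succ = X i.succ 0 * v 0 + (X.submatrix Fin.succ Fin.succ *ᵥ Fin.tail v) i := by
  simp [mulVec, dotProduct, Fin.sum_univ_succ, Fin.tail]

theorem sub_submatrix_succ_mulVec_tail {X : Matrix (Fin (n + 1)) (Fin (n + 1)) R}
    {v : Fin (n + 1) → R} {E : R} (hv : X *ᵥ v = E • v) :
    (E • 1 - X.submatrix Fin.succ Fin.succ) *ᵥ Fin.tail v = v 0 • fun i => X i.succ 0 := by
  ext i
  have hrow := mulVec_apply_succ X v i
  rw [hv, Pi.smul_apply, smul_eq_mul] at hrow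
  rw [sub_mulVec, smul_mulVec, one_mulVec, Pi.sub_apply, Pi.smul_apply, Pi.smul_apply,
    smul_eq_mul, smul_eq_mul, Fin.tail]
  linear_combination hrow

theorem IsSymm.mulVec_dotProduct_mulVec_self {ι : Type*} [Fintype ι] [DecidableEq ι]
    {B : Matrix ι ι R} (hB : B.IsSymm) (b : ι → R) : (B *ᵥ b) ⬝ᵥ (B *ᵥ b) = b ⬝ᵥ (B ^ 2 *ᵥ b) := by
  rw [sq, ← mulVec_mulVec, dotProduct_mulVec b B, ← mulVec_transpose, hB.eq]

end Matrix

/-- Formula for the first coordinate of a unit eigenvector: if `X v = E v` with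
`‖v‖ = 1` and `E` is not an eigenvalue of the principal minor `X⁽¹⁾`, then
`v₁² = (1 + ⟨X_1, (E - X⁽¹⁾)⁻² X_1⟩)⁻¹`. -/
theorem eigenvector_first_coordinate
    (n : ℕ) (X : Matrix (Fin (n+1)) (Fin (n+1)) ℝ)
    (hX : X.IsHermitian)
    (v : Fin (n+1) → ℝ) (E : ℝ)
    (hv : X.mulVec v = E • v)
    (hnorm : ∑ i, (v i) ^ 2 = 1)
    (hE : (E • (1 : Matrix (Fin n) (Fin n) ℝ)
        - X.submatrix Fin.succ Fin.succ).det ≠ 0) :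
    (v 0) ^ 2
      = (1 + dotProduct (fun i : Fin n => X (Fin.succ i) 0)
          ((((E • (1 : Matrix (Fin n) (Fin n) ℝ)
              - X.submatrix Fin.succ Fin.succ)⁻¹) ^ 2).mulVec
            (fun i : Fin n => X (Fin.succ i) 0)))⁻¹ := by
  set A := E • (1 : Matrix (Fin n) (Fin n) ℝ) - X.submatrix Fin.succ Fin.succ
  set X₁ : Fin n → ℝ := fun i => X i.succ 0
  have : Invertible A := A.invertibleOfIsUnitDet (isUnit_iff_ne_zero.mpr hE)
  have hA : A⁻¹.IsSymm :=
    ((isSymm_one.smul E).sub ((isHermitian_iff_isSymm.mp hX).submatrix Fin.succ)).inv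
  have htail : Fin.tail v = v 0 • A⁻¹ *ᵥ X₁ := by
    rw [← mulVec_smul]
    exact (inv_mulVec_eq_vec (sub_submatrix_succ_mulVec_tail hv).symm).symm
  have hsplit : v 0 ^ 2 + Fin.tail v ⬝ᵥ Fin.tail v = 1 := by
    rw [← hnorm, Fin.sum_univ_succ]
    simp [dotProduct, Fin.tail, sq]
  have htail_sq : Fin.tail v ⬝ᵥ Fin.tail v = v 0 ^ 2 * (X₁ ⬝ᵥ (A⁻¹ ^ 2 *ᵥ X₁)) := by
    rw [htail, smul_dotProduct, dotProduct_smul, IsSymm.mulVec_dotProduct_mulVec_self hA,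
      smul_eq_mul, smul_eq_mul]
    ring
  exact eq_inv_of_mul_eq_one_left (by linear_combination hsplit - htail_sq)
end
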